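/- arXiv:2205.13407 — 6 statements merged into one kernel-verified Lean document; each statement's English description precedes it below -/
import Mathlib

section
/- Let m, n, k, P be real numbers with m ≥ n ≥ k ≥ 1 and 1 ≤ P ≤ m/n. Consider the feasible set S of points x = (x1, x2, x3) ∈ ℝ³ satisfying (mnk/P)² ≤ x1·x2·x3, nk/P ≤ x1, mk/P ≤ x2, and mn/P ≤ x3. Then the minimum of x1 + x2 + x3 over S equals nk + mk/P + mn/P, and it is attained at x1 = nk, x2 = mk/P, x3 = mn/P. -/
/-! With `a = nk`, `b = mk/P`, `c = mn/P` the constraints read `abc ≤ x₁x₂x₃`, `b ≤ x₂`, `c ≤ x₃`,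
and `P ≤ m/n` makes `a` the smallest of the three. Then
`x₂x₃ (x₁ + x₂ + x₃ - a - b - c) = (x₁x₂x₃ - abc) + x₃(x₂ - a)(x₂ - b) + (x₃ - c)(x₂x₃ - ab)`
is a sum of nonnegative terms. -/

theorem add_add_le_add_add_of_mul_mul_le {a b c x y z : ℝ} (ha : 0 < a) (hab : a ≤ b)
    (hac : a ≤ c) (hxyz : a * b * c ≤ x * y * z) (hy : b ≤ y) (hz : c ≤ z) :
    a + b + c ≤ x + y + z := by
  have hy0 : 0 < y := by linarith
  have hz0 : 0 < z := by linarith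
  have hyz : a * b ≤ y * z := by nlinarith
  have key : y * z * ((x + y + z) - (a + b + c)) =
      (x * y * z - a * b * c) + z * (y - a) * (y - b) + (z - c) * (y * z - a * b) := by ring
  have hnonneg : 0 ≤ y * z * ((x + y + z) - (a + b + c)) := by
    rw [key]
    have h₁ : 0 ≤ z * (y - a) * (y - b) :=
      mul_nonneg (mul_nonneg hz0.le (by linarith)) (by linarith)
    have h₂ : 0 ≤ (z - c) * (y * z - a * b) := mul_nonneg (by linarith) (by linarith)
    linarith
  linarith [nonneg_of_mul_nonneg_right hnonneg (mul_pos hy0 hz0)]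

theorem stmt_4_general (m n k P : ℝ) (hk : 1 ≤ k) (hnk : k ≤ n)
    (hP1 : 1 ≤ P) (hP : P ≤ m / n) :
    (∀ x1 x2 x3 : ℝ,
        (m * n * k / P) ^ 2 ≤ x1 * x2 * x3 →
        n * k / P ≤ x1 → m * k / P ≤ x2 → m * n / P ≤ x3 →
        n * k + m * k / P + m * n / P ≤ x1 + x2 + x3) ∧
    ((m * n * k / P) ^ 2 ≤ (n * k) * (m * k / P) * (m * n / P) ∧
      n * k / P ≤ n * k ∧ m * k / P ≤ m * k / P ∧ m * n / P ≤ m * n / P) := by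
  have hP0 : 0 < P := by linarith
  have hk0 : 0 < k := by linarith
  have hn0 : 0 < n := by linarith
  have hPn : P * n ≤ m := (le_div_iff₀ hn0).mp hP
  have hnk0 : 0 < n * k := mul_pos hn0 hk0
  have hsq : (m * n * k / P) ^ 2 = n * k * (m * k / P) * (m * n / P) := by
    field_simp
  have hb : n * k ≤ m * k / P := by
    rw [le_div_iff₀ hP0]; nlinarith
  have hc : n * k ≤ m * n / P := by
    rw [le_div_iff₀ hP0]; nlinarith [mul_le_mul_of_nonneg_left hnk hP0.le]
  refine ⟨fun x1 x2 x3 hx _ hx2 hx3 => ?_, hsq.le, ?_, le_rfl, le_rfl⟩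
  · exact add_add_le_add_add_of_mul_mul_le hnk0 hb hc (hsq ▸ hx) hx2 hx3
  · exact div_le_self hnk0.le hP1

/-- Case 1 of the key optimization problem (`P ≤ m/n`): the minimum of
`x₁ + x₂ + x₃` over the feasible set defined by `(mnk/P)² ≤ x₁x₂x₃`,
`nk/P ≤ x₁`, `mk/P ≤ x₂`, `mn/P ≤ x₃` equals `nk + mk/P + mn/P`, attained at
`x₁ = nk`, `x₂ = mk/P`, `x₃ = mn/P`. -/
theorem stmt_4 (m n k P : ℝ) (hk : 1 ≤ k) (hnk : k ≤ n) (hmn : n ≤ m)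
    (hP1 : 1 ≤ P) (hP : P ≤ m / n) :
    (∀ x1 x2 x3 : ℝ,
        (m * n * k / P) ^ 2 ≤ x1 * x2 * x3 →
        n * k / P ≤ x1 → m * k / P ≤ x2 → m * n / P ≤ x3 →
        n * k + m * k / P + m * n / P ≤ x1 + x2 + x3) ∧
    ((m * n * k / P) ^ 2 ≤ (n * k) * (m * k / P) * (m * n / P) ∧
      n * k / P ≤ n * k ∧ m * k / P ≤ m * k / P ∧ m * n / P ≤ m * n / P) :=
  stmt_4_general m n k P hk hnk hP1 hP
end

section
/- Let m, n, k, P be real numbers with m ≥ n ≥ k ≥ 1 and m/n ≤ P ≤ mn/k². Consider the feasible set S of points x = (x1, x2, x3) ∈ ℝ³ satisfying (mnk/P)² ≤ x1·x2·x3, nk/P ≤ x1, mk/P ≤ x2, and mn/P ≤ x3. Then the minimum of x1 + x2 + x3 over S equals 2·(mnk²/P)^{1/2} + mn/P, and it is attained at x1 = x2 = (mnk²/P)^{1/2}, x3 = mn/P. -/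
/-!
Put `a = √(mn/P)`, so the target value is `2ak + a²` and the product constraint reads
`(a²k)² ≤ x₁x₂x₃`. By AM-GM, `(x₁ + x₂)√x₃ ≥ 2a²k`, so with `t = √x₃ ≥ a` the sum is at least
`2a²k/t + t²`. This is increasing in `t ≥ a` because `k ≤ a` (which is `P ≤ mn/k²`), so it is at
least its value `2ak + a²` at `t = a`. The point `(ak, ak, a²)` attains it, and it is feasible
because `m ≤ nP` and `n ≤ mP`.
-/

theorem two_mul_le_add_mul_sqrt {c x₁ x₂ x₃ : ℝ} (hc : 0 ≤ c) (hx₁ : 0 ≤ x₁) (hx₂ : 0 ≤ x₂)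
    (hx₃ : 0 ≤ x₃) (h : c ^ 2 ≤ x₁ * x₂ * x₃) : 2 * c ≤ (x₁ + x₂) * √x₃ := by
  refine (pow_le_pow_iff_left₀ (by positivity) (by positivity) two_ne_zero).mp ?_
  calc (2 * c) ^ 2 ≤ 4 * x₁ * x₂ * x₃ := by linarith
    _ ≤ (x₁ + x₂) ^ 2 * x₃ := mul_le_mul_of_nonneg_right (four_mul_le_sq_add x₁ x₂) hx₃
    _ = ((x₁ + x₂) * √x₃) ^ 2 := by rw [mul_pow, Real.sq_sqrt hx₃]

theorem two_mul_mul_add_sq_le_add_add {a k x₁ x₂ x₃ : ℝ} (hk : 0 < k) (hka : k ≤ a)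
    (hx₁ : 0 ≤ x₁) (hx₂ : 0 ≤ x₂) (hx₃ : a ^ 2 ≤ x₃) (h : (a ^ 2 * k) ^ 2 ≤ x₁ * x₂ * x₃) :
    2 * (a * k) + a ^ 2 ≤ x₁ + x₂ + x₃ := by
  have ha : 0 < a := hk.trans_le hka
  have hx₃_nonneg : 0 ≤ x₃ := (sq_nonneg a).trans hx₃
  set t := √x₃
  have hat : a ≤ t := (Real.le_sqrt ha.le hx₃_nonneg).mpr hx₃
  have ht : 0 < t := ha.trans_le hat
  have ht_sq : t ^ 2 = x₃ := Real.sq_sqrt hx₃_nonneg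
  have hAMGM : 2 * (a ^ 2 * k) ≤ (x₁ + x₂) * t :=
    two_mul_le_add_mul_sqrt (by positivity) hx₁ hx₂ hx₃_nonneg h
  -- `t ↦ 2a²k/t + t²` is increasing on `[a, ∞)`: `(t - a)(t(t + a) - 2ak) ≥ 0`.
  have hmono : (2 * (a * k) + a ^ 2) * t ≤ 2 * (a ^ 2 * k) + t ^ 2 * t := by
    nlinarith [mul_nonneg (sub_nonneg.mpr hat)
      (show 0 ≤ t * (t + a) - 2 * a * k by nlinarith)]
  refine le_of_mul_le_mul_right ?_ ht
  calc (2 * (a * k) + a ^ 2) * t ≤ 2 * (a ^ 2 * k) + t ^ 2 * t := hmono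
    _ ≤ (x₁ + x₂ + x₃) * t := by rw [ht_sq]; linarith

theorem div_le_sqrt_mul_div {p q P : ℝ} (hp : 0 ≤ p) (hP : 0 < P) (h : p ≤ q * P) :
    p / P ≤ √(q * p / P) := by
  refine Real.le_sqrt_of_sq_le ?_
  rw [div_pow, div_le_div_iff₀ (by positivity) hP]
  nlinarith [mul_le_mul_of_nonneg_left h (mul_nonneg hp hP.le)]

/-- Case 2 of the key optimization problem (`m/n ≤ P ≤ mn/k²`): the minimum of
`x₁ + x₂ + x₃` over the feasible set defined by `(mnk/P)² ≤ x₁x₂x₃`,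
`nk/P ≤ x₁`, `mk/P ≤ x₂`, `mn/P ≤ x₃` equals `2(mnk²/P)^{1/2} + mn/P`,
attained at `x₁ = x₂ = (mnk²/P)^{1/2}`, `x₃ = mn/P`. -/
theorem stmt_5 (m n k P : ℝ) (hk : 1 ≤ k) (hnk : k ≤ n) (hmn : n ≤ m)
    (hP1 : m / n ≤ P) (hP2 : P ≤ m * n / k ^ 2) :
    (∀ x1 x2 x3 : ℝ,
        (m * n * k / P) ^ 2 ≤ x1 * x2 * x3 →
        n * k / P ≤ x1 → m * k / P ≤ x2 → m * n / P ≤ x3 →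
        2 * Real.sqrt (m * n * k ^ 2 / P) + m * n / P ≤ x1 + x2 + x3) ∧
    ((m * n * k / P) ^ 2 ≤
        Real.sqrt (m * n * k ^ 2 / P) * Real.sqrt (m * n * k ^ 2 / P) *
          (m * n / P) ∧
      n * k / P ≤ Real.sqrt (m * n * k ^ 2 / P) ∧
      m * k / P ≤ Real.sqrt (m * n * k ^ 2 / P) ∧
      m * n / P ≤ m * n / P) := by
  have hk0 : 0 < k := one_pos.trans_le hk
  have hn0 : 0 < n := hk0.trans_le hnk
  have hm0 : 0 < m := hn0.trans_le hmn
  have hP0 : 0 < P := (div_pos hm0 hn0).trans_le hP1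
  have hmP : m ≤ n * P := by rw [mul_comm]; exact (div_le_iff₀ hn0).mp hP1
  have hnP : n ≤ m * P := by nlinarith
  set a := √(m * n / P)
  have ha_sq : a ^ 2 = m * n / P := Real.sq_sqrt (by positivity)
  have hka : k ≤ a := Real.le_sqrt_of_sq_le <| by
    rw [le_div_iff₀ hP0, mul_comm]; exact (le_div_iff₀ (by positivity)).mp hP2
  have hs : √(m * n * k ^ 2 / P) = a * k := by
    rw [mul_div_right_comm, Real.sqrt_mul (by positivity), Real.sqrt_sq hk0.le]
  have hc : m * n * k / P = a ^ 2 * k := by rw [ha_sq]; ring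
  rw [hs, hc, ← ha_sq]
  refine ⟨?_, le_of_eq (by ring), ?_, ?_, le_rfl⟩
  · intro x₁ x₂ x₃ h h₁ h₂ h₃
    have hx₁ : 0 ≤ x₁ := le_trans (by positivity) h₁
    have hx₂ : 0 ≤ x₂ := le_trans (by positivity) h₂
    exact two_mul_mul_add_sq_le_add_add hk0 hka hx₁ hx₂ h₃ h
  · rw [mul_div_right_comm]
    exact mul_le_mul_of_nonneg_right (div_le_sqrt_mul_div hn0.le hP0 hnP) hk0.le
  · rw [mul_div_right_comm]
    refine mul_le_mul_of_nonneg_right ?_ hk0.le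
    simpa only [mul_comm n m] using div_le_sqrt_mul_div hm0.le hP0 hmP
end

section
/- Let n1, n2, n3 be positive integers, set m = max{n1, n2, n3}, n = median{n1, n2, n3}, k = min{n1, n2, n3}, and let P be a real number with 1 ≤ P ≤ m/n. If F is a finite set of triples (i1, i2, i3) with 1 ≤ i1 ≤ n1, 1 ≤ i2 ≤ n2, 1 ≤ i3 ≤ n3 and |F| ≥ n1·n2·n3 / P, then |φ_A(F)| + |φ_B(F)| + |φ_C(F)| ≥ nk + mk/P + mn/P. -/
/-!
Each projection of `F` has fibres of size at most the omitted dimension, so the projection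
omitting dimension `nᵢ` has at least `|F| / nᵢ ≥ n₁n₂n₃ / (P nᵢ)` elements. With the
dimensions sorted as `m ≥ n ≥ k`, the projections omitting `n` and `k` are therefore at least
`β = mk/P` and `γ = mn/P`, and by Loomis–Whitney the product of all three projections is at least
`|F|² ≥ (mnk/P)² = αβγ` with `α = nk`. Since `P ≤ m/n` makes `α` the smallest of `α, β, γ`,
the elementary inequality `α + β + γ ≤ A + B + C` (for `β ≤ B`, `γ ≤ C`, `αβγ ≤ ABC`) concludes.
-/

open Finset

namespace Finset

variable {ι α β γ : Type*}

theorem card_le_card_image_mul_of_injOn [DecidableEq α] {s : Finset ι} {t : Finset β}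
    (f : ι → α) {g : ι → β} (hg : ∀ i ∈ s, g i ∈ t) (hfg : Set.InjOn (fun i ↦ (f i, g i)) s) :
    #s ≤ #(s.image f) * #t := by
  rw [← card_product]
  exact card_le_card_of_injOn _ (fun i hi ↦ mem_product.2 ⟨mem_image_of_mem f hi, hg i hi⟩) hfg

variable [DecidableEq α] [DecidableEq β] [DecidableEq γ]

theorem loomis_whitney (F : Finset (α × β × γ)) :
    #F ^ 2 ≤ #(F.image fun t ↦ (t.1, t.2.1)) * #(F.image fun t ↦ (t.2.1, t.2.2)) *
      #(F.image fun t ↦ (t.1, t.2.2)) := by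
  set A := F.image fun t ↦ (t.1, t.2.1)
  set B := F.image fun t ↦ (t.2.1, t.2.2)
  set C := F.image fun t ↦ (t.1, t.2.2)
  -- a fibre of `F` over `(a, b) ∈ A` injects into the fibre of `C` over `a`
  -- and into the fibre of `B` over `b`
  have hfibre : ∀ p ∈ A, #{t ∈ F | (t.1, t.2.1) = p} ^ 2 ≤
      #{q ∈ C | q.1 = p.1} * #{q ∈ B | q.1 = p.2} := by
    intro p _
    rw [sq]
    gcongr
    · refine card_le_card_of_injOn (fun t ↦ (t.1, t.2.2)) (fun t ht ↦ ?_) ?_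
      · simp only [coe_filter, Set.mem_ofPred_eq] at ht ⊢
        exact ⟨mem_image_of_mem _ ht.1, by rw [← ht.2]⟩
      · intro t ht t' ht' h
        simp_all [Prod.ext_iff]
    · refine card_le_card_of_injOn (fun t ↦ (t.2.1, t.2.2)) (fun t ht ↦ ?_) ?_
      · simp only [coe_filter, Set.mem_ofPred_eq] at ht ⊢
        exact ⟨mem_image_of_mem _ ht.1, by rw [← ht.2]⟩
      · intro t ht t' ht' h
        simp_all [Prod.ext_iff]
  have hA_subset : A ⊆ C.image Prod.fst ×ˢ B.image Prod.fst := by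
    simp only [A, B, C, subset_iff, mem_image, mem_product]
    rintro _ ⟨t, ht, rfl⟩
    exact ⟨⟨_, ⟨t, ht, rfl⟩, rfl⟩, ⟨_, ⟨t, ht, rfl⟩, rfl⟩⟩
  calc #F ^ 2 = (∑ p ∈ A, #{t ∈ F | (t.1, t.2.1) = p}) ^ 2 := by rw [← card_eq_sum_card_image]
    _ ≤ #A * ∑ p ∈ A, #{t ∈ F | (t.1, t.2.1) = p} ^ 2 := sq_sum_le_card_mul_sum_sq
    _ ≤ #A * ∑ p ∈ C.image Prod.fst ×ˢ B.image Prod.fst,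
          #{q ∈ C | q.1 = p.1} * #{q ∈ B | q.1 = p.2} := by
      gcongr
      exact (sum_le_sum hfibre).trans (sum_le_sum_of_subset hA_subset)
    _ = #A * #B * #C := by
      rw [sum_product' (f := fun a b ↦ #{q ∈ C | q.1 = a} * #{q ∈ B | q.1 = b}), ← sum_mul_sum,
        ← card_eq_sum_card_image, ← card_eq_sum_card_image, mul_comm #C, mul_assoc]

end Finset

theorem add_add_le_add_add_of_mul_mul_le_s7 {a b c A B C : ℝ} (ha : 0 < a) (hab : a ≤ b)
    (hac : a ≤ c) (hB : b ≤ B) (hC : c ≤ C) (h : a * b * c ≤ A * B * C) :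
    a + b + c ≤ A + B + C := by
  have hBC : 0 < B * C := mul_pos (by linarith) (by linarith)
  -- with `B = b + x`, `C = c + y`, the difference `a b c - (a + b + c - B - C) B C`
  -- is a sum of products of the nonnegative quantities `x, y, b - a, c - a, b, c`
  have hx : 0 ≤ B - b := sub_nonneg.2 hB
  have hy : 0 ≤ C - c := sub_nonneg.2 hC
  have key : (a + b + c - B - C) * (B * C) ≤ a * b * c := by
    nlinarith [mul_nonneg (mul_nonneg (sub_nonneg.2 hac) (ha.le.trans hab)) hy,
      mul_nonneg (mul_nonneg (sub_nonneg.2 hab) (ha.le.trans hac)) hx,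
      mul_nonneg (mul_nonneg (sub_nonneg.2 hac) hx) hy,
      mul_nonneg (mul_nonneg hx (ha.le.trans hab)) hy,
      mul_nonneg (mul_nonneg hx hx) (ha.le.trans hac),
      mul_nonneg (mul_nonneg hx hx) hy, mul_nonneg (mul_nonneg hy hy) (ha.le.trans hab),
      mul_nonneg (mul_nonneg hx hy) hy]
  have : a + b + c - B - C ≤ A :=
    le_of_mul_le_mul_right (key.trans (h.trans_eq (mul_assoc _ _ _))) hBC
  linarith

theorem mul_add_mul_div_add_mul_div_le_of_le {x y z : ℕ} {P f X Y Z : ℝ} (hx : 0 < x)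
    (hxy : x ≤ y) (hP : 0 < P) (hPz : P ≤ (z : ℝ) / y) (hX : f ≤ X * x) (hY : f ≤ Y * y)
    (hXYZ : f ^ 2 ≤ X * Y * Z) (hf : (x * y * z : ℝ) / P ≤ f) :
    (y * x : ℝ) + z * x / P + z * y / P ≤ X + Y + Z := by
  have hx' : (0 : ℝ) < x := by exact_mod_cast hx
  have hxy' : (x : ℝ) ≤ y := by exact_mod_cast hxy
  have hy' : (0 : ℝ) < y := hx'.trans_le hxy'
  have hPy : P * y ≤ z := (le_div_iff₀ hy').1 hPz
  have hf' : (x * y * z : ℝ) ≤ f * P := (div_le_iff₀ hP).1 hf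
  have := add_add_le_add_add_of_mul_mul_le_s7 (A := Z) (B := Y) (C := X)
    (by positivity : (0 : ℝ) < y * x)
    (show (y * x : ℝ) ≤ z * x / P by rw [le_div_iff₀ hP]; nlinarith)
    (show (y * x : ℝ) ≤ z * y / P by rw [le_div_iff₀ hP]; nlinarith)
    (show (z * x : ℝ) / P ≤ Y by rw [div_le_iff₀ hP]; nlinarith)
    (show (z * y : ℝ) / P ≤ X by rw [div_le_iff₀ hP]; nlinarith)
    (calc (y * x : ℝ) * (z * x / P) * (z * y / P) = (x * y * z / P) ^ 2 := by ring
      _ ≤ f ^ 2 := pow_le_pow_left₀ (by positivity) hf 2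
      _ ≤ Z * Y * X := by linarith)
  linarith

theorem mul_add_mul_div_add_mul_div_le_of_max_min {n1 n2 n3 m n k : ℕ} (hn1 : 0 < n1)
    (hn2 : 0 < n2) (hn3 : 0 < n3) (hm : m = max n1 (max n2 n3)) (hk : k = min n1 (min n2 n3))
    (hn : n = n1 + n2 + n3 - m - k) {P f A B C : ℝ} (hP : 0 < P) (hP2 : P ≤ (m : ℝ) / n)
    (hA : f ≤ A * n3) (hB : f ≤ B * n1) (hC : f ≤ C * n2) (hABC : f ^ 2 ≤ A * B * C)
    (hf : (n1 * n2 * n3 : ℝ) / P ≤ f) :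
    (n * k : ℝ) + m * k / P + m * n / P ≤ A + B + C := by
  rcases le_total n1 n2 with h12 | h21
  · rcases le_total n2 n3 with h23 | h32
    · obtain ⟨rfl, rfl, rfl⟩ : m = n3 ∧ n = n2 ∧ k = n1 := by omega
      linarith [mul_add_mul_div_add_mul_div_le_of_le (Z := A) hn1 h12 hP hP2 hB hC
        (hABC.trans_eq (by ring)) (hf.trans_eq' (by ring))]
    rcases le_total n1 n3 with h13 | h31
    · obtain ⟨rfl, rfl, rfl⟩ : m = n2 ∧ n = n3 ∧ k = n1 := by omega
      linarith [mul_add_mul_div_add_mul_div_le_of_le (Z := C) hn1 h13 hP hP2 hB hA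
        (hABC.trans_eq (by ring)) (hf.trans_eq' (by ring))]
    · obtain ⟨rfl, rfl, rfl⟩ : m = n2 ∧ n = n1 ∧ k = n3 := by omega
      linarith [mul_add_mul_div_add_mul_div_le_of_le (Z := C) hn3 h31 hP hP2 hA hB
        (hABC.trans_eq (by ring)) (hf.trans_eq' (by ring))]
  rcases le_total n1 n3 with h13 | h31
  · obtain ⟨rfl, rfl, rfl⟩ : m = n3 ∧ n = n1 ∧ k = n2 := by omega
    linarith [mul_add_mul_div_add_mul_div_le_of_le (Z := A) hn2 h21 hP hP2 hC hB
      (hABC.trans_eq (by ring)) (hf.trans_eq' (by ring))]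
  rcases le_total n2 n3 with h23 | h32
  · obtain ⟨rfl, rfl, rfl⟩ : m = n1 ∧ n = n3 ∧ k = n2 := by omega
    linarith [mul_add_mul_div_add_mul_div_le_of_le (Z := B) hn2 h23 hP hP2 hC hA
      (hABC.trans_eq (by ring)) (hf.trans_eq' (by ring))]
  · obtain ⟨rfl, rfl, rfl⟩ : m = n1 ∧ n = n2 ∧ k = n3 := by omega
    linarith [mul_add_mul_div_add_mul_div_le_of_le (Z := B) hn3 h32 hP hP2 hA hC
      (hABC.trans_eq (by ring)) (hf.trans_eq' (by ring))]

/-- Data-access lower bound, case 1 (`1 ≤ P ≤ m/n`): if a processor is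
assigned a set `F` of at least `n₁n₂n₃/P` lattice points of the matrix
multiplication iteration space, then the total size of the three projections
of `F` is at least `nk + mk/P + mn/P`, where `m ≥ n ≥ k` are the sorted
dimensions. -/
theorem stmt_7 (n1 n2 n3 : ℕ) (hn1 : 0 < n1) (hn2 : 0 < n2) (hn3 : 0 < n3)
    (m n k : ℕ)
    (hm : m = max n1 (max n2 n3)) (hk : k = min n1 (min n2 n3))
    (hn : n = n1 + n2 + n3 - m - k)
    (P : ℝ) (hP1 : 1 ≤ P) (hP2 : P ≤ (m : ℝ) / n)
    (F : Finset (ℕ × ℕ × ℕ))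
    (hF : ∀ t ∈ F, (1 ≤ t.1 ∧ t.1 ≤ n1) ∧ (1 ≤ t.2.1 ∧ t.2.1 ≤ n2) ∧
      (1 ≤ t.2.2 ∧ t.2.2 ≤ n3))
    (hcard : (n1 * n2 * n3 : ℝ) / P ≤ F.card) :
    (n * k : ℝ) + m * k / P + m * n / P ≤
      ((F.image fun t => (t.1, t.2.1)).card : ℝ) +
        (F.image fun t => (t.2.1, t.2.2)).card +
        (F.image fun t => (t.1, t.2.2)).card := by
  have hA : #F ≤ #(F.image fun t ↦ (t.1, t.2.1)) * n3 := by
    simpa using card_le_card_image_mul_of_injOn (t := Icc 1 n3) _ (g := fun t ↦ t.2.2)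
      (fun t ht ↦ mem_Icc.2 (hF t ht).2.2) (fun t _ t' _ h ↦ by simp_all [Prod.ext_iff])
  have hB : #F ≤ #(F.image fun t ↦ (t.2.1, t.2.2)) * n1 := by
    simpa using card_le_card_image_mul_of_injOn (t := Icc 1 n1) _ (g := fun t ↦ t.1)
      (fun t ht ↦ mem_Icc.2 (hF t ht).1) (fun t _ t' _ h ↦ by simp_all [Prod.ext_iff])
  have hC : #F ≤ #(F.image fun t ↦ (t.1, t.2.2)) * n2 := by
    simpa using card_le_card_image_mul_of_injOn (t := Icc 1 n2) _ (g := fun t ↦ t.2.1)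
      (fun t ht ↦ mem_Icc.2 (hF t ht).2.1) (fun t _ t' _ h ↦ by simp_all [Prod.ext_iff])
  exact mul_add_mul_div_add_mul_div_le_of_max_min hn1 hn2 hn3 hm hk hn (by linarith) hP2
    (by exact_mod_cast hA) (by exact_mod_cast hB) (by exact_mod_cast hC)
    (by exact_mod_cast F.loomis_whitney) hcard
end

section
/- Let n1, n2, n3 be positive integers, set m = max{n1, n2, n3}, n = median{n1, n2, n3}, k = min{n1, n2, n3}, and let P be a real number with m/n ≤ P ≤ mn/k². If F is a finite set of triples (i1, i2, i3) with 1 ≤ i1 ≤ n1, 1 ≤ i2 ≤ n2, 1 ≤ i3 ≤ n3 and |F| ≥ n1·n2·n3 / P, then |φ_A(F)| + |φ_B(F)| + |φ_C(F)| ≥ 2·(mnk²/P)^{1/2} + mn/P. -/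
/-!
Let `X` be the projection of `F` that forgets the smallest side `k`. Its fibres have at most `k`
points, so `X ≥ |F|/k ≥ mn/P`. By Loomis–Whitney the other two projections satisfy
`YZ ≥ |F|²/X`, hence `Y + Z ≥ 2S/√X` with `S = mnk/P` by AM–GM. The function
`X ↦ X + 2S/√X` is increasing once `X^{3/2} ≥ S`, and at `X = mn/P` this is exactly the
hypothesis `P ≤ mn/k²`; its value there is `mn/P + 2(mnk²/P)^{1/2}`.
-/

open Finset

section LoomisWhitney

variable {α β γ : Type*} [DecidableEq α] [DecidableEq β] [DecidableEq γ]

theorem loomisWhitney_card_sq_le (F : Finset (α × β × γ)) :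
    #F ^ 2 ≤ #(F.image fun t => (t.1, t.2.1)) * #(F.image fun t => (t.2.1, t.2.2)) *
      #(F.image fun t => (t.1, t.2.2)) := by
  set A := F.image fun t => (t.1, t.2.1)
  set B := F.image fun t => (t.2.1, t.2.2)
  set C := F.image fun t => (t.1, t.2.2)
  let fiber (p : α × β) : Finset (α × β × γ) := {t ∈ F | (t.1, t.2.1) = p}
  -- Two points in a common fibre over `A` are recovered from their projections to `B` and `C`.
  have hpairs : ∑ p ∈ A, #(fiber p) ^ 2 ≤ #B * #C := by
    calc ∑ p ∈ A, #(fiber p) ^ 2 = #(A.sigma fun p => fiber p ×ˢ fiber p) := by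
          simp only [card_sigma, card_product, sq]
      _ ≤ #(B ×ˢ C) := by
          refine card_le_card_of_injOn
            (fun q => ((q.2.1.2.1, q.2.1.2.2), (q.2.2.1, q.2.2.2.2))) ?_ ?_
          · rintro ⟨p, t, s⟩ hq
            simp only [coe_sigma, Set.mem_sigma_iff, mem_coe, mem_product, fiber, mem_filter] at hq
            exact mem_product.2 ⟨mem_image_of_mem _ hq.2.1.1, mem_image_of_mem _ hq.2.2.1⟩
          · rintro ⟨⟨a, b⟩, ⟨a₁, b₁, c₁⟩, ⟨a₂, b₂, c₂⟩⟩ hq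
              ⟨⟨a', b'⟩, ⟨a₁', b₁', c₁'⟩, ⟨a₂', b₂', c₂'⟩⟩ hq' h
            simp only [coe_sigma, Set.mem_sigma_iff, mem_coe, mem_product, fiber, mem_filter,
              Prod.mk.injEq] at hq hq' h
            obtain ⟨⟨rfl, rfl⟩, rfl, rfl⟩ := h
            grind
      _ = #B * #C := card_product B C
  calc #F ^ 2 = (∑ p ∈ A, #(fiber p)) ^ 2 := by rw [← card_eq_sum_card_image]
    _ ≤ #A * ∑ p ∈ A, #(fiber p) ^ 2 := sq_sum_le_card_mul_sum_sq
    _ ≤ #A * (#B * #C) := by gcongr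
    _ = #A * #B * #C := (mul_assoc ..).symm

end LoomisWhitney

theorem card_le_card_mul_card_image_of_injOn {α β γ : Type*} [DecidableEq β] [DecidableEq γ]
    {s : Finset α} {t : Finset γ} (f : α → β) (g : α → γ)
    (hinj : Set.InjOn (fun a => (f a, g a)) s) (hg : ∀ a ∈ s, g a ∈ t) :
    #s ≤ #t * #(s.image f) := by
  calc #s ≤ #(s.image f ×ˢ t) :=
        card_le_card_of_injOn _
          (fun a ha => mem_product.2 ⟨mem_image_of_mem f ha, hg a ha⟩) hinj
    _ = #t * #(s.image f) := by rw [card_product, mul_comm]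

theorem card_le_mul_card_projections {n1 n2 n3 : ℕ} {F : Finset (ℕ × ℕ × ℕ)}
    (hF : ∀ t ∈ F, (1 ≤ t.1 ∧ t.1 ≤ n1) ∧ (1 ≤ t.2.1 ∧ t.2.1 ≤ n2) ∧
      (1 ≤ t.2.2 ∧ t.2.2 ≤ n3)) :
    #F ≤ n3 * #(F.image fun t => (t.1, t.2.1)) ∧
      #F ≤ n1 * #(F.image fun t => (t.2.1, t.2.2)) ∧
      #F ≤ n2 * #(F.image fun t => (t.1, t.2.2)) := by
  refine ⟨?_, ?_, ?_⟩
  · simpa using card_le_card_mul_card_image_of_injOn (t := Icc 1 n3) _ (fun t => t.2.2)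
      (fun t _ s _ h => by grind) (fun t ht => mem_Icc.2 (hF t ht).2.2)
  · simpa using card_le_card_mul_card_image_of_injOn (t := Icc 1 n1) _ (fun t => t.1)
      (fun t _ s _ h => by grind) (fun t ht => mem_Icc.2 (hF t ht).1)
  · simpa using card_le_card_mul_card_image_of_injOn (t := Icc 1 n2) _ (fun t => t.2.1)
      (fun t _ s _ h => by grind) (fun t ht => mem_Icc.2 (hF t ht).2.1)

lemma two_mul_add_sq_le_sq_add {k s u w : ℝ} (hk : 0 < k) (hks : k ≤ s) (hsu : s ≤ u)
    (hw : 2 * (k * s ^ 2) ≤ u * w) : 2 * (k * s) + s ^ 2 ≤ u ^ 2 + w := by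
  have hu : 0 < u := hk.trans_le (hks.trans hsu)
  refine le_of_mul_le_mul_left ?_ hu
  -- `u³ + 2ks² - u(s² + 2ks) = (u - s)(u² + us - 2ks)`
  nlinarith [mul_nonneg (sub_nonneg.2 hsu) (by nlinarith : 0 ≤ u ^ 2 + u * s - 2 * k * s)]

theorem two_mul_sqrt_add_le_of_projection_bounds {m n k P f X Y Z : ℝ} (hk : 0 < k) (hP : 0 < P)
    (hPk : P ≤ m * n / k ^ 2) (hf : m * n * k / P ≤ f) (hX : f ≤ k * X)
    (hLW : f ^ 2 ≤ X * Y * Z) (hY : 0 ≤ Y) (hZ : 0 ≤ Z) :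
    2 * √(m * n * k ^ 2 / P) + m * n / P ≤ X + Y + Z := by
  have hx₀ : k ^ 2 ≤ m * n / P := by
    rw [le_div_iff₀ hP, mul_comm]
    rwa [le_div_iff₀ (by positivity)] at hPk
  have hkf : k * (m * n / P) ≤ f := (le_of_eq (by ring)).trans hf
  have hx₀X : m * n / P ≤ X := le_of_mul_le_mul_left (hkf.trans hX) hk
  set s := √(m * n / P)
  set u := √X
  have hs : s ^ 2 = m * n / P := Real.sq_sqrt ((sq_nonneg k).trans hx₀)
  have hu : u ^ 2 = X := Real.sq_sqrt ((sq_nonneg k).trans (hx₀.trans hx₀X))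
  have hks : k ≤ s := Real.le_sqrt_of_sq_le hx₀
  have hsu : s ≤ u := Real.sqrt_le_sqrt hx₀X
  have hw : 2 * (k * s ^ 2) ≤ u * (Y + Z) := by
    rw [mul_add]
    refine two_mul_le_add_of_sq_le_mul (by positivity) (by positivity) ?_
    calc (k * s ^ 2) ^ 2 ≤ f ^ 2 := pow_le_pow_left₀ (by positivity) (hs ▸ hkf) 2
      _ ≤ X * Y * Z := hLW
      _ = u * Y * (u * Z) := by rw [← hu]; ring
  have hsqrt : √(m * n * k ^ 2 / P) = k * s := by
    rw [mul_div_right_comm, Real.sqrt_mul' _ (sq_nonneg k), Real.sqrt_sq hk.le, mul_comm]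
  rw [hsqrt, ← hs, ← hu, add_assoc]
  exact two_mul_add_sq_le_sq_add hk hks hsu hw

/-- Data-access lower bound, case 2 (`m/n ≤ P ≤ mn/k²`): if a processor is
assigned a set `F` of at least `n₁n₂n₃/P` lattice points of the matrix
multiplication iteration space, then the total size of the three projections
of `F` is at least `2(mnk²/P)^{1/2} + mn/P`, where `m ≥ n ≥ k` are the sorted
dimensions. -/
theorem stmt_8 (n1 n2 n3 : ℕ) (hn1 : 0 < n1) (hn2 : 0 < n2) (hn3 : 0 < n3)
    (m n k : ℕ)
    (hm : m = max n1 (max n2 n3)) (hk : k = min n1 (min n2 n3))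
    (hn : n = n1 + n2 + n3 - m - k)
    (P : ℝ) (hP1 : (m : ℝ) / n ≤ P) (hP2 : P ≤ (m : ℝ) * n / (k : ℝ) ^ 2)
    (F : Finset (ℕ × ℕ × ℕ))
    (hF : ∀ t ∈ F, (1 ≤ t.1 ∧ t.1 ≤ n1) ∧ (1 ≤ t.2.1 ∧ t.2.1 ≤ n2) ∧
      (1 ≤ t.2.2 ∧ t.2.2 ≤ n3))
    (hcard : (n1 * n2 * n3 : ℝ) / P ≤ F.card) :
    2 * Real.sqrt ((m : ℝ) * n * (k : ℝ) ^ 2 / P) + (m : ℝ) * n / P ≤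
      ((F.image fun t => (t.1, t.2.1)).card : ℝ) +
        (F.image fun t => (t.2.1, t.2.2)).card +
        (F.image fun t => (t.1, t.2.2)).card := by
  set A := F.image fun t => (t.1, t.2.1)
  set B := F.image fun t => (t.2.1, t.2.2)
  set C := F.image fun t => (t.1, t.2.2)
  have hk₀ : 0 < k := by omega
  have hP : 0 < P := lt_of_lt_of_le (div_pos (by norm_cast; omega) (by norm_cast; omega)) hP1
  have hvol : (n1 * n2 * n3 : ℝ) = m * n * k := by
    norm_cast
    subst hn hm hk
    grind
  obtain ⟨hA, hB, hC⟩ := card_le_mul_card_projections hF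
  have hLW := loomisWhitney_card_sq_le F
  -- Single out the projection that forgets the smallest dimension `k`.
  obtain ⟨X, Y, Z, hX, hXYZ, hsum⟩ : ∃ X Y Z : ℕ,
      #F ≤ k * X ∧ #F ^ 2 ≤ X * Y * Z ∧ X + Y + Z = #A + #B + #C := by
    obtain rfl | rfl | rfl : k = n1 ∨ k = n2 ∨ k = n3 := by omega
    · exact ⟨#B, #A, #C, hB, hLW.trans_eq (by ring), by ring⟩
    · exact ⟨#C, #A, #B, hC, hLW.trans_eq (by ring), by ring⟩
    · exact ⟨#A, #B, #C, hA, hLW, rfl⟩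
  have hsumR : (X + Y + Z : ℝ) = #A + #B + #C := by exact_mod_cast hsum
  rw [← hsumR]
  exact two_mul_sqrt_add_le_of_projection_bounds (by exact_mod_cast hk₀) hP hP2 (hvol ▸ hcard)
    (by exact_mod_cast hX) (by exact_mod_cast hXYZ) (Nat.cast_nonneg _) (Nat.cast_nonneg _)
end

section
/- Let m, n, k, P be strictly positive real numbers with m ≥ n ≥ k and m/n ≤ P ≤ mn/k². Define p = (P·m/n)^{1/2} and q = (P·n/m)^{1/2}. Then p ≥ 1, q ≥ 1, p·q = P, and mn/(p·q) + mk/p + nk/q = 2·(mnk²/P)^{1/2} + mn/P. Consequently, the communication cost mn/(p·q) + mk/p + nk/q − (mn + mk + nk)/P of the parallel matrix multiplication algorithm on a p × q × 1 processor grid equals 2·(mnk²/P)^{1/2} − (mk + nk)/P, matching the 2D-case lower bound. -/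
/-!
The radicands of `p` and `q` multiply to `P²`, so `pq = P`; and `(mk/p)²` and `(nk/q)²` both equal
`mnk²/P`, so each of the two mixed terms is `√(mnk²/P)`. The bounds `p, q ≥ 1` come from
`P ≥ m/n ≥ 1`.
-/

namespace Real

theorem sqrt_mul_div_mul_sqrt_mul_div {P a b : ℝ} (hP : 0 ≤ P) (ha : 0 < a) (hb : 0 < b) :
    √(P * a / b) * √(P * b / a) = P := by
  rw [← sqrt_mul (by positivity), show P * a / b * (P * b / a) = P ^ 2 by field_simp,
    sqrt_sq hP]

theorem mul_div_sqrt_mul_div {P a b c : ℝ} (hP : 0 < P) (ha : 0 < a) (hb : 0 < b)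
    (hc : 0 ≤ c) : a * c / √(P * a / b) = √(a * b * c ^ 2 / P) := by
  rw [← sqrt_sq (by positivity : 0 ≤ a * c), ← sqrt_div' _ (by positivity)]
  congr 1
  field_simp

end Real

theorem stmt_11_general (m n k P : ℝ) (hm : 0 < m) (hn : 0 < n) (hk : 0 < k)
    (hP : 0 < P) (hmn : n ≤ m)
    (hP1 : m / n ≤ P) :
    1 ≤ Real.sqrt (P * m / n) ∧
    1 ≤ Real.sqrt (P * n / m) ∧
    Real.sqrt (P * m / n) * Real.sqrt (P * n / m) = P ∧
    m * n / (Real.sqrt (P * m / n) * Real.sqrt (P * n / m)) +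
        m * k / Real.sqrt (P * m / n) + n * k / Real.sqrt (P * n / m) =
      2 * Real.sqrt (m * n * k ^ 2 / P) + m * n / P ∧
    m * n / (Real.sqrt (P * m / n) * Real.sqrt (P * n / m)) +
        m * k / Real.sqrt (P * m / n) + n * k / Real.sqrt (P * n / m) -
        (m * n + m * k + n * k) / P =
      2 * Real.sqrt (m * n * k ^ 2 / P) - (m * k + n * k) / P := by
  have hratio : 1 ≤ m / n := (one_le_div hn).mpr hmn
  have hp : 1 ≤ P * m / n := by
    rw [mul_div_assoc]
    exact one_le_mul_of_one_le_of_one_le (hratio.trans hP1) hratio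
  have hq : 1 ≤ P * n / m := by
    rwa [le_div_iff₀ hm, one_mul, ← div_le_iff₀ hn]
  have hpq := Real.sqrt_mul_div_mul_sqrt_mul_div hP.le hm hn
  have hmk := Real.mul_div_sqrt_mul_div hP hm hn hk.le
  have hnk := Real.mul_div_sqrt_mul_div hP hn hm hk.le
  rw [mul_comm n m] at hnk
  have hsum : m * n / (Real.sqrt (P * m / n) * Real.sqrt (P * n / m)) +
      m * k / Real.sqrt (P * m / n) + n * k / Real.sqrt (P * n / m) =
      2 * Real.sqrt (m * n * k ^ 2 / P) + m * n / P := by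
    rw [hpq, hmk, hnk]
    ring
  exact ⟨Real.one_le_sqrt.mpr hp, Real.one_le_sqrt.mpr hq, hpq, hsum, by rw [hsum]; ring⟩

/-- Optimal 2D processor grid (`m/n ≤ P ≤ mn/k²`): with `p = (Pm/n)^{1/2}` and
`q = (Pn/m)^{1/2}`, we have `p, q ≥ 1`, `pq = P`, the communicated-data
identity `mn/(pq) + mk/p + nk/q = 2(mnk²/P)^{1/2} + mn/P`, and the resulting
communication cost matches the 2D-case lower bound
`2(mnk²/P)^{1/2} − (mk + nk)/P`. -/
theorem stmt_11 (m n k P : ℝ) (hm : 0 < m) (hn : 0 < n) (hk : 0 < k)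
    (hP : 0 < P) (hnk : k ≤ n) (hmn : n ≤ m)
    (hP1 : m / n ≤ P) (hP2 : P ≤ m * n / k ^ 2) :
    1 ≤ Real.sqrt (P * m / n) ∧
    1 ≤ Real.sqrt (P * n / m) ∧
    Real.sqrt (P * m / n) * Real.sqrt (P * n / m) = P ∧
    m * n / (Real.sqrt (P * m / n) * Real.sqrt (P * n / m)) +
        m * k / Real.sqrt (P * m / n) + n * k / Real.sqrt (P * n / m) =
      2 * Real.sqrt (m * n * k ^ 2 / P) + m * n / P ∧
    m * n / (Real.sqrt (P * m / n) * Real.sqrt (P * n / m)) +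
        m * k / Real.sqrt (P * m / n) + n * k / Real.sqrt (P * n / m) -
        (m * n + m * k + n * k) / P =
      2 * Real.sqrt (m * n * k ^ 2 / P) - (m * k + n * k) / P :=
  stmt_11_general m n k P hm hn hk hP hmn hP1
end

section
/- Let m, n, k, P be strictly positive real numbers with m ≥ n ≥ k and P ≥ mn/k². Define p = (P/(mnk))^{1/3}·m, q = (P/(mnk))^{1/3}·n, and r = (P/(mnk))^{1/3}·k. Then p ≥ q ≥ r ≥ 1, p·q·r = P, and mn/(p·q) + nk/(q·r) + mk/(p·r) = 3·(mnk/P)^{2/3}. Consequently, the communication cost mn/(pq) + nk/(qr) + mk/(pr) − (mn + mk + nk)/P of the parallel matrix multiplication algorithm on this p × q × r processor grid equals 3·(mnk/P)^{2/3} − (mn + mk + nk)/P, matching the 3D-case lower bound. -/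
/-!
With `c = (P/(mnk))^{1/3}` the grid `(cm, cn, ck)` has volume `c³·mnk = P`, and each of the three
face terms `mn/(cm·cn)`, `nk/(cn·ck)`, `mk/(cm·ck)` equals `c⁻²`, so their sum is
`3c⁻² = 3(mnk/P)^{2/3}`. The ordering `p ≥ q ≥ r` is inherited from `m ≥ n ≥ k`, and `r ≥ 1` holds
because `r³ = Pk²/(mn) ≥ 1` is exactly the hypothesis `P ≥ mn/k²`.
-/

namespace Real

lemma rpow_one_div_three_pow_three {x : ℝ} (hx : 0 ≤ x) : (x ^ ((1 : ℝ) / 3)) ^ 3 = x := by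
  rw [one_div]
  exact rpow_inv_natCast_pow hx three_ne_zero

lemma inv_rpow_two_div_three {x : ℝ} (hx : 0 ≤ x) :
    x⁻¹ ^ ((2 : ℝ) / 3) = ((x ^ ((1 : ℝ) / 3)) ^ 2)⁻¹ := by
  rw [inv_rpow hx, ← rpow_natCast, ← rpow_mul hx]
  norm_num

end Real

section ScaledGrid

variable {m n k P c : ℝ}

lemma scaledGrid_volume (hmnk : m * n * k ≠ 0) (hc : c ^ 3 = P / (m * n * k)) :
    c * m * (c * n) * (c * k) = P := by
  calc c * m * (c * n) * (c * k) = c ^ 3 * (m * n * k) := by ring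
    _ = P := by rw [hc, div_mul_cancel₀ _ hmnk]

lemma scaledGrid_faces (hm : m ≠ 0) (hn : n ≠ 0) (hk : k ≠ 0) (hc : c ≠ 0) :
    m * n / (c * m * (c * n)) + n * k / (c * n * (c * k)) + m * k / (c * m * (c * k)) =
      3 / c ^ 2 := by
  field_simp
  ring

lemma one_le_scaledGrid_min (hm : 0 < m) (hn : 0 < n) (hk : 0 < k) (hc0 : 0 ≤ c)
    (hc : c ^ 3 = P / (m * n * k)) (hP : m * n / k ^ 2 ≤ P) : 1 ≤ c * k := by
  have hcube : (c * k) ^ 3 = P * k ^ 2 / (m * n) := by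
    rw [mul_pow, hc]
    field_simp
  have hone : 1 ≤ (c * k) ^ 3 := by
    rw [hcube, one_le_div (by positivity), ← div_le_iff₀ (by positivity)]
    exact hP
  exact le_of_pow_le_pow_left₀ three_ne_zero (by positivity) (by simpa using hone)

end ScaledGrid

/-- Optimal 3D processor grid (`P ≥ mn/k²`): with
`p = (P/(mnk))^{1/3}·m`, `q = (P/(mnk))^{1/3}·n`, `r = (P/(mnk))^{1/3}·k`,
we have `p ≥ q ≥ r ≥ 1`, `pqr = P`, the communicated-data identity
`mn/(pq) + nk/(qr) + mk/(pr) = 3(mnk/P)^{2/3}`, and the resulting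
communication cost matches the 3D-case lower bound
`3(mnk/P)^{2/3} − (mn + mk + nk)/P`. -/
theorem stmt_12 (m n k P : ℝ) (hm : 0 < m) (hn : 0 < n) (hk : 0 < k)
    (hP : 0 < P) (hnk : k ≤ n) (hmn : n ≤ m) (hP2 : m * n / k ^ 2 ≤ P) :
    (P / (m * n * k)) ^ ((1 : ℝ) / 3) * n ≤ (P / (m * n * k)) ^ ((1 : ℝ) / 3) * m ∧
    (P / (m * n * k)) ^ ((1 : ℝ) / 3) * k ≤ (P / (m * n * k)) ^ ((1 : ℝ) / 3) * n ∧
    1 ≤ (P / (m * n * k)) ^ ((1 : ℝ) / 3) * k ∧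
    ((P / (m * n * k)) ^ ((1 : ℝ) / 3) * m) * ((P / (m * n * k)) ^ ((1 : ℝ) / 3) * n) *
        ((P / (m * n * k)) ^ ((1 : ℝ) / 3) * k) = P ∧
    m * n / (((P / (m * n * k)) ^ ((1 : ℝ) / 3) * m) * ((P / (m * n * k)) ^ ((1 : ℝ) / 3) * n)) +
        n * k / (((P / (m * n * k)) ^ ((1 : ℝ) / 3) * n) * ((P / (m * n * k)) ^ ((1 : ℝ) / 3) * k)) +
        m * k / (((P / (m * n * k)) ^ ((1 : ℝ) / 3) * m) * ((P / (m * n * k)) ^ ((1 : ℝ) / 3) * k)) =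
      3 * (m * n * k / P) ^ ((2 : ℝ) / 3) ∧
    m * n / (((P / (m * n * k)) ^ ((1 : ℝ) / 3) * m) * ((P / (m * n * k)) ^ ((1 : ℝ) / 3) * n)) +
        n * k / (((P / (m * n * k)) ^ ((1 : ℝ) / 3) * n) * ((P / (m * n * k)) ^ ((1 : ℝ) / 3) * k)) +
        m * k / (((P / (m * n * k)) ^ ((1 : ℝ) / 3) * m) * ((P / (m * n * k)) ^ ((1 : ℝ) / 3) * k)) -
        (m * n + m * k + n * k) / P =
      3 * (m * n * k / P) ^ ((2 : ℝ) / 3) - (m * n + m * k + n * k) / P := by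
  have hx : 0 ≤ P / (m * n * k) := by positivity
  set c := (P / (m * n * k)) ^ ((1 : ℝ) / 3)
  have hc : 0 < c := by positivity
  have hc3 : c ^ 3 = P / (m * n * k) := Real.rpow_one_div_three_pow_three hx
  have hcost : m * n / (c * m * (c * n)) + n * k / (c * n * (c * k)) + m * k / (c * m * (c * k)) =
      3 * (m * n * k / P) ^ ((2 : ℝ) / 3) := by
    rw [scaledGrid_faces hm.ne' hn.ne' hk.ne' hc.ne', ← inv_div P (m * n * k),
      Real.inv_rpow_two_div_three hx, div_eq_mul_inv]
  exact ⟨by gcongr, by gcongr, one_le_scaledGrid_min hm hn hk hc.le hc3 hP2,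
    scaledGrid_volume (by positivity) hc3, hcost, by rw [hcost]⟩
end
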